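/- Let G be a finite p-subgroup of GL_n(k), where k is an algebraically closed field of characteristic 0 and p > n. Then G is abelian and can be generated by at most n elements. -/

import Mathlib

/-!
A finite `p`-group is nilpotent, so if `G` were not abelian it would contain a commutator
`c = ⁅g, h⁆ ≠ 1` commuting with `g` and `h`. Having `p`-power order, `c` is diagonalizable with an
eigenvalue `μ ≠ 1` of `p`-power order. On the `μ`-eigenspace `W` of `c` we get `g h g⁻¹ = μ h`,
and taking determinants gives `μ ^ dim W = 1`, impossible since `0 < dim W < p`.

Once `G` is abelian, it is simultaneously diagonalizable, so the eigenvalues on its (at most `n`)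
joint eigenspaces embed `G` into `(kˣ)ⁿ`. As finite subgroups of `kˣ` are cyclic, induction on the
coordinates shows that a finite subgroup of `(kˣ)ⁿ` is generated by `n` elements.
-/

open Module Function

open scoped commutatorElement MatrixGroups

namespace Module.End

variable {k V : Type*} [Field k] [AddCommGroup V] [Module k V]

theorem isSemisimple_of_pow_eq_one {f : End k V} {m : ℕ} (hm : (m : k) ≠ 0) (hf : f ^ m = 1) :
    f.IsSemisimple :=
  isSemisimple_of_squarefree_aeval_eq_zero
    (Polynomial.separable_X_pow_sub_C 1 hm one_ne_zero).squarefree (by simp [hf])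

theorem eigenspace_one_eq_top_iff {f : End k V} : f.eigenspace 1 = ⊤ ↔ f = 1 := by
  rw [eigenspace_def, one_smul, LinearMap.ker_eq_top, sub_eq_zero]

theorem HasEigenvalue.pow_eq_one {f : End k V} {μ : k} (hμ : f.HasEigenvalue μ) {m : ℕ}
    (hf : f ^ m = 1) : μ ^ m = 1 := by
  obtain ⟨v, hv⟩ := hμ.exists_hasEigenvector
  refine smul_left_injective k hv.2 ?_
  simpa [hf] using (hv.pow_apply m).symm

theorem exists_hasEigenvalue_ne_one_of_pow_eq_one [IsAlgClosed k] [FiniteDimensional k V]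
    {f : End k V} {m : ℕ} (hm : (m : k) ≠ 0) (hf : f ^ m = 1) (hf1 : f ≠ 1) :
    ∃ μ ≠ 1, f.HasEigenvalue μ := by
  by_contra! h
  refine hf1 (eigenspace_one_eq_top_iff.mp (top_le_iff.mp ?_))
  rw [← (isSemisimple_of_pow_eq_one hm hf).iSup_eigenspace_eq_top]
  refine iSup_le fun μ ↦ ?_
  rcases eq_or_ne μ 1 with rfl | hμ
  · exact le_rfl
  · simp [not_not.mp (hasEigenvalue_iff.not.mp (h μ hμ))]

theorem pow_finrank_eigenspace_eq_one [FiniteDimensional k V] {g h : (End k V)ˣ} {c : End k V}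
    (hcg : Commute c g) (hch : Commute c h) (hrel : (g * h : End k V) = c * h * g) (μ : k) :
    μ ^ finrank k (c.eigenspace μ) = 1 := by
  let W := c.eigenspace μ
  let res (u : End k V) (hu : Commute c u) : End k W :=
    u.restrict (mapsTo_genEigenspace_of_comm hu μ 1)
  have det_res_ne_zero (u : (End k V)ˣ) (hu : Commute c u) : LinearMap.det (res u hu) ≠ 0 := by
    have hu' : Commute c ↑u⁻¹ := hu.units_inv_right
    have hinv : res u hu * res _ hu' = 1 := by
      ext x
      change ((u * u⁻¹ : (End k V)ˣ) : End k V) x = x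
      simp
    refine left_ne_zero_of_mul_eq_one (b := LinearMap.det (res _ hu')) ?_
    rw [← map_mul, hinv, map_one]
  have hres : res g hcg * res h hch = μ • 1 * res h hch * res g hcg := by
    ext x
    have hx := mem_eigenspace_iff.mp (res h hch (res g hcg x)).2
    exact (LinearMap.congr_fun hrel x).trans hx
  have hdet := congrArg LinearMap.det hres
  simp only [map_mul, LinearMap.det_smul, map_one, mul_one] at hdet
  exact mul_right_cancel₀ (mul_ne_zero (det_res_ne_zero g hcg) (det_res_ne_zero h hch))
    (by linear_combination -hdet)

theorem commutatorElement_eq_one_of_finrank_lt [IsAlgClosed k] [FiniteDimensional k V] {p : ℕ}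
    (hp : p.Prime) (hpk : (p : k) ≠ 0) (hV : finrank k V < p) {g h : (End k V)ˣ}
    (hg : Commute ⁅g, h⁆ g) (hh : Commute ⁅g, h⁆ h) {s : ℕ} (hs : ⁅g, h⁆ ^ p ^ s = 1) :
    ⁅g, h⁆ = 1 := by
  by_contra hne
  set c := ⁅g, h⁆
  have hcm : (c : End k V) ^ p ^ s = 1 := by rw [← Units.val_pow_eq_pow_val, hs, Units.val_one]
  obtain ⟨μ, hμ1, hμ⟩ := exists_hasEigenvalue_ne_one_of_pow_eq_one
    (by exact_mod_cast pow_ne_zero s hpk) hcm (fun h1 ↦ hne (Units.ext h1))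
  have hrel : g * h = c * h * g := by simp [c, commutatorElement_def]
  have hd := pow_finrank_eigenspace_eq_one hg.units_val hh.units_val (congrArg Units.val hrel) μ
  set d := finrank k ((c : End k V).eigenspace μ)
  have hd0 : d ≠ 0 := Submodule.finrank_eq_zero.not.mpr hμ
  have hdp : d < p := (Submodule.finrank_le _).trans_lt hV
  have hcop : Nat.Coprime (p ^ s) d := (Nat.coprime_of_lt_prime hd0 hdp hp).pow_left s
  apply hμ1
  simpa [hcop.gcd_eq_one] using pow_gcd_eq_one.mpr ⟨hμ.pow_eq_one hcm, hd⟩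

end Module.End

theorem Group.commute_of_forall_commutatorElement_mem_center_eq_one {G : Type*} [Group G]
    [Group.IsNilpotent G] (h : ∀ a b : G, ⁅a, b⁆ ∈ Subgroup.center G → ⁅a, b⁆ = 1) (a b : G) :
    Commute a b := by
  have hle (n : ℕ) : Subgroup.upperCentralSeries G n ≤ Subgroup.center G := by
    induction n with
    | zero => simp
    | succ n ih =>
      refine fun x hx ↦ Subgroup.mem_center_iff.mpr fun y ↦ ?_
      have := h x y (ih (Subgroup.mem_upperCentralSeries_succ_iff.mp hx y))
      exact (commutatorElement_eq_one_iff_mul_comm.mp this).symm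
  obtain ⟨n, hn⟩ := Group.IsNilpotent.nilpotent' (G := G)
  have hcenter : Subgroup.center G = ⊤ := top_le_iff.mp (hn ▸ hle n)
  exact (Subgroup.mem_center_iff.mp (hcenter ▸ Subgroup.mem_top a) b).symm

theorem Group.rank_le_rank_add_one_of_isCyclic_quotient {H : Type*} [Group H] [Group.FG H]
    (N : Subgroup H) [N.Normal] [Group.FG N] [IsCyclic (H ⧸ N)] :
    Group.rank H ≤ Group.rank N + 1 := by
  obtain ⟨S, hScard, hS⟩ := Group.rank_spec N
  obtain ⟨q, hq⟩ := IsCyclic.exists_generator (α := H ⧸ N)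
  obtain ⟨h₀, rfl⟩ := QuotientGroup.mk_surjective q
  classical
  set T := insert h₀ (S.map ⟨N.subtype, N.subtype_injective⟩)
  suffices Subgroup.closure (T : Set H) = ⊤ by
    calc Group.rank H ≤ T.card := Group.rank_le this
      _ ≤ S.card + 1 := (Finset.card_insert_le _ _).trans (by simp)
      _ = Group.rank N + 1 := by rw [hScard]
  rw [eq_top_iff]
  intro x _
  obtain ⟨j, hj⟩ := Subgroup.mem_zpowers_iff.mp (hq (x : H ⧸ N))
  have hker : (h₀ ^ j)⁻¹ * x ∈ N := by
    rw [← QuotientGroup.eq, QuotientGroup.mk_zpow, hj]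
  have hN : N ≤ Subgroup.closure (T : Set H) := by
    rw [← N.range_subtype, MonoidHom.range_eq_map, ← hS, MonoidHom.map_closure]
    exact Subgroup.closure_mono (by simp [T])
  have hh₀ : h₀ ∈ Subgroup.closure (T : Set H) := Subgroup.subset_closure (by simp [T])
  simpa using mul_mem (zpow_mem hh₀ j) (hN hker)

theorem Group.rank_le_card_of_injective_pi {R : Type*} [CommRing R] [IsDomain R] {ι : Type*}
    [Finite ι] {H : Type*} [Group H] [Finite H] (f : H →* (ι → R)) (hf : Injective f) :
    Group.rank H ≤ Nat.card ι := by
  induction hι : Nat.card ι generalizing ι H with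
  | zero =>
    have : IsEmpty ι := Finite.card_eq_zero_iff.mp hι
    have : Subsingleton H := hf.subsingleton
    rw [Group.rank_eq_zero]
  | succ n ih =>
    obtain ⟨i⟩ : Nonempty ι := Finite.card_pos_iff.mp (by omega)
    classical
    let ψ : H →* Rˣ := ((Pi.evalMonoidHom _ i).comp f).toHomUnits
    have : IsCyclic (H ⧸ ψ.ker) := isCyclic_of_injective_ringHom
      ((Units.coeHom R).comp (QuotientGroup.kerLift ψ))
      (Units.val_injective.comp (QuotientGroup.kerLift_injective ψ))
    let f' : ψ.ker →* ({j // j ≠ i} → R) :=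
      MonoidHom.pi fun j ↦ (Pi.evalMonoidHom _ j.1).comp (f.comp ψ.ker.subtype)
    have hf' : Injective f' := by
      refine fun x y hxy ↦ Subtype.ext (hf (funext fun j ↦ ?_))
      by_cases hj : j = i
      · subst hj
        exact congrArg Units.val (x.2.trans y.2.symm)
      · exact congrFun hxy ⟨j, hj⟩
    have hcard : Nat.card {j // j ≠ i} = n := by
      rw [← Nat.card_congr (Equiv.optionSubtypeNe i), Finite.card_option] at hι
      omega
    calc Group.rank H ≤ Group.rank ψ.ker + 1 := Group.rank_le_rank_add_one_of_isCyclic_quotient _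
      _ ≤ n + 1 := by gcongr; exact ih f' hf' hcard

namespace Representation

variable {k G V : Type*} [Field k] [Group G] [AddCommGroup V] [Module k V]
  (ρ : Representation k G V)

theorem commute_of_isPGroup [IsAlgClosed k] [FiniteDimensional k V] [Finite G] {p : ℕ}
    (hp : p.Prime) (hG : IsPGroup p G) (hpk : (p : k) ≠ 0) (hV : finrank k V < p)
    (hρ : Injective ρ) (a b : G) : Commute a b := by
  have : Fact p.Prime := ⟨hp⟩
  have := hG.isNilpotent
  refine Group.commute_of_forall_commutatorElement_mem_center_eq_one (fun a b hab ↦ ?_) a b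
  obtain ⟨s, hs⟩ := hG ⁅a, b⁆
  set u := ρ.toHomUnits
  have hu : Injective u := fun x y hxy ↦ hρ (congrArg Units.val hxy)
  have hcomm (x : G) : Commute ⁅u a, u b⁆ (u x) := by
    have hx : Commute x ⁅a, b⁆ := Subgroup.mem_center_iff.mp hab x
    rw [← map_commutatorElement]
    exact hx.symm.map u
  apply hu
  rw [map_one, map_commutatorElement]
  refine End.commutatorElement_eq_one_of_finrank_lt hp hpk hV (hcomm a) (hcomm b) (s := s) ?_
  rw [← map_commutatorElement, ← map_pow, hs, map_one]

def jointEigenspace (χ : G → k) : Submodule k V :=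
  ⨅ g, End.eigenspace (ρ g) (χ g)

theorem mem_jointEigenspace {χ : G → k} {v : V} :
    v ∈ ρ.jointEigenspace χ ↔ ∀ g, ρ g v = χ g • v := by
  simp [jointEigenspace]

theorem iSupIndep_jointEigenspace (hG : ∀ a b : G, Commute a b) :
    iSupIndep ρ.jointEigenspace :=
  (End.independent_iInf_maxGenEigenspace_of_forall_mapsTo ρ fun a b _ ↦
    End.mapsTo_maxGenEigenspace_of_comm ((hG b a).map ρ) _).mono
    fun _ ↦ iInf_mono fun _ ↦ End.eigenspace_le_maxGenEigenspace

theorem iSup_jointEigenspace_eq_top [IsAlgClosed k] [FiniteDimensional k V] [Finite G]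
    (hG : ∀ a b : G, Commute a b) (hcard : (Nat.card G : k) ≠ 0) :
    ⨆ χ, ρ.jointEigenspace χ = ⊤ := by
  have hss (g : G) : End.IsSemisimple (ρ g) :=
    End.isSemisimple_of_pow_eq_one hcard (by rw [← map_pow, pow_card_eq_one', map_one])
  simpa only [jointEigenspace, (hss _).isFinitelySemisimple.maxGenEigenspace_eq_eigenspace] using
    End.iSup_iInf_maxGenEigenspace_eq_top_of_iSup_maxGenEigenspace_eq_top_of_commute ρ
      (fun a b _ ↦ (hG a b).map ρ) fun g ↦ End.iSup_maxGenEigenspace_eq_top (ρ g)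

def weight (χ : G → k) (hχ : ρ.jointEigenspace χ ≠ ⊥) : G →* k where
  toFun := χ
  map_one' := by
    obtain ⟨v, hv, hv0⟩ := Submodule.exists_mem_ne_zero_of_ne_bot hχ
    refine smul_left_injective k hv0 ?_
    simpa using ((ρ.mem_jointEigenspace.mp hv) 1).symm
  map_mul' a b := by
    obtain ⟨v, hv, hv0⟩ := Submodule.exists_mem_ne_zero_of_ne_bot hχ
    have hv' := ρ.mem_jointEigenspace.mp hv
    refine smul_left_injective k hv0 ?_
    change χ (a * b) • v = (χ a * χ b) • v
    rw [← hv', map_mul, End.mul_apply, hv', map_smul, hv', smul_smul, mul_comm]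

theorem eq_one_of_forall_weight_eq_one (htop : ⨆ χ, ρ.jointEigenspace χ = ⊤) {g : G}
    (hg : ∀ χ, ρ.jointEigenspace χ ≠ ⊥ → χ g = 1) : ρ g = 1 := by
  refine End.eigenspace_one_eq_top_iff.mp (top_le_iff.mp (htop ▸ iSup_le fun χ ↦ ?_))
  by_cases hχ : ρ.jointEigenspace χ = ⊥
  · simp [hχ]
  · exact (iInf_le _ g).trans_eq (by rw [hg χ hχ])

theorem rank_le_finrank [IsAlgClosed k] [FiniteDimensional k V] [Finite G]
    (hG : ∀ a b : G, Commute a b) (hcard : (Nat.card G : k) ≠ 0) (hρ : Injective ρ) :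
    Group.rank G ≤ finrank k V := by
  have hind := ρ.iSupIndep_jointEigenspace hG
  let := hind.fintypeNeBotOfFiniteDimensional
  let f : G →* ({χ // ρ.jointEigenspace χ ≠ ⊥} → k) :=
    MonoidHom.pi fun χ ↦ ρ.weight χ.1 χ.2
  have hf : Injective f := by
    refine (injective_iff_map_eq_one f).mpr fun g hg ↦ hρ ?_
    rw [map_one]
    exact ρ.eq_one_of_forall_weight_eq_one (ρ.iSup_jointEigenspace_eq_top hG hcard)
      fun χ hχ ↦ congrFun hg ⟨χ, hχ⟩
  calc Group.rank G ≤ Nat.card _ := Group.rank_le_card_of_injective_pi f hf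
    _ = Fintype.card _ := Nat.card_eq_fintype_card
    _ ≤ finrank k V := hind.subtype_ne_bot_le_finrank

end Representation

/-- Let `G` be a finite `p`-subgroup of `GL_n(k)`, `k` algebraically closed of characteristic
`0` and `p > n`. Then `G` is abelian and generated by at most `n` elements. -/
theorem stmt7 (p n : ℕ) (hp : p.Prime) (hpn : n < p)
    (k : Type*) [Field k] [IsAlgClosed k] [CharZero k]
    (G : Subgroup (GL (Fin n) k)) [Finite G] (hG : IsPGroup p G) :
    (∀ a b : G, a * b = b * a) ∧
      ∃ S : Finset (GL (Fin n) k), (S : Set (GL (Fin n) k)) ⊆ (G : Set (GL (Fin n) k)) ∧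
        Subgroup.closure (S : Set (GL (Fin n) k)) = G ∧ S.card ≤ n := by
  let ρ : Representation k G (Fin n → k) :=
    (Units.coeHom _).comp (Matrix.GeneralLinearGroup.toLin.toMonoidHom.comp G.subtype)
  have hρ : Injective ρ :=
    Units.val_injective.comp (Matrix.GeneralLinearGroup.toLin.injective.comp G.subtype_injective)
  have hV : finrank k (Fin n → k) = n := by simp
  have hcomm := ρ.commute_of_isPGroup hp hG (Nat.cast_ne_zero.mpr hp.ne_zero) (hV.trans_lt hpn) hρ
  refine ⟨hcomm, ?_⟩
  obtain ⟨S, hScard, hS⟩ := Group.rank_spec G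
  refine ⟨S.map ⟨G.subtype, G.subtype_injective⟩, fun x hx ↦ ?_, ?_, ?_⟩
  · obtain ⟨y, -, rfl⟩ := Finset.mem_map.mp hx
    exact y.2
  · rw [Finset.coe_map, Function.Embedding.coeFn_mk, ← MonoidHom.map_closure, hS,
      ← MonoidHom.range_eq_map, G.range_subtype]
  · rw [Finset.card_map, hScard]
    exact (ρ.rank_le_finrank hcomm (Nat.cast_ne_zero.mpr Nat.card_pos.ne') hρ).trans_eq hV
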